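/- arXiv:2208.14255 — 2 statements merged into one kernel-verified Lean document; each statement's English description precedes it below -/
import Mathlib

section
/- Suppose $\alpha(u):=\#\{j: 1/p_j\le u\}$ is regularly varying at $\infty$ of order $\gamma\in(0,1)$. Then $\frac{1}{\alpha(n)}\sum_{j=1}^\infty \Pr(M_{n,j}\ge 1)=\frac{1}{\alpha(n)}\sum_{j=1}^\infty (1-e^{-np_j})\to\Gamma(1-\gamma)$ as $n\to\infty$. -/
/-!
With `Nₙ(t) = #{j : t < n pⱼ}`, the layer-cake formula gives
`∑ⱼ (1 - e^{-n pⱼ}) = ∫₀^∞ e^{-t} Nₙ(t) dt`. Since `α(n s) ≤ Nₙ(t) ≤ α(n/t)` for `s < 1/t`,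
regular variation gives `Nₙ(t)/α(n) → t^{-γ}`. For `γ < ρ < 1`, Potter's bound
`α(n u) ≤ 2^ρ u^ρ α(n)` (`u ≥ 1`) and monotonicity of `α` dominate `Nₙ(t)/α(n)` by the integrable
`2^ρ t^{-ρ} + 1` against `e^{-t}`, and dominated convergence yields
`∫₀^∞ e^{-t} t^{-γ} dt = Γ(1-γ)`.
-/

open Filter Topology Real Set

noncomputable section

/-- `α(u) = #{j : 1/p_j ≤ u}`, as a real number. -/
def alpha0 (p : ℕ → ℝ) (u : ℝ) : ℝ := (Nat.card {j : ℕ | 1 / p j ≤ u} : ℝ)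

/-- A function `α` is regularly varying at `∞` of order `γ` if `α(nu)/α(n) → u^γ` for all `u>0`. -/
def RegularlyVarying (α : ℝ → ℝ) (γ : ℝ) : Prop :=
  ∀ u : ℝ, 0 < u → Tendsto (fun n : ℕ => α ((n : ℝ) * u) / α (n : ℝ)) atTop (𝓝 (u ^ γ))

/-- `g_σ(m) = ∑_{l=1}^{m-1} 1/(l-σ)` (with `g_σ(0) = g_σ(1) = 0`). -/
def gfun (σ : ℝ) (m : ℕ) : ℝ := ∑ l ∈ Finset.Icc 1 (m - 1), (1 : ℝ) / ((l : ℝ) - σ)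

/-- Expectation of `g(M)` for `M ∼ Poisson(lam)`. -/
def Epois (lam : ℝ) (g : ℕ → ℝ) : ℝ :=
  ∑' m : ℕ, g m * (Real.exp (-lam) * lam ^ m / (Nat.factorial m : ℝ))

open MeasureTheory

section Counting

variable {ι : Type*}

lemma Summable.finite_setOf_le {x : ι → ℝ} (hx : Summable x) {c : ℝ} (hc : 0 < c) :
    {j | c ≤ x j}.Finite := by
  simpa only [not_lt] using
    eventually_cofinite.1 (hx.tendsto_cofinite_zero.eventually (gt_mem_nhds hc))

lemma Summable.finite_setOf_lt {x : ι → ℝ} (hx : Summable x) {c : ℝ} (hc : 0 < c) :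
    {j | c < x j}.Finite :=
  (hx.finite_setOf_le hc).subset fun _ (hj : c < _) => hj.le

lemma summable_one_sub_exp_neg {x : ι → ℝ} (hx0 : 0 ≤ x) (hx : Summable x) :
    Summable fun j => 1 - exp (-x j) :=
  hx.of_nonneg_of_le (fun j => sub_nonneg.2 (exp_le_one_iff.2 (neg_nonpos.2 (hx0 j))))
    fun j => by linarith [add_one_le_exp (-x j)]

variable [MeasurableSpace ι] [MeasurableSingletonClass ι]

lemma natCard_eq_toReal_count (s : Set ι) : (Nat.card s : ℝ) = (Measure.count s).toReal := by
  rcases s.finite_or_infinite with hs | hs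
  · simp [Measure.count_apply_finite s hs, Nat.card_eq_card_finite_toFinset hs]
  · have := hs.to_subtype
    simp [Measure.count_apply_infinite hs]

lemma measurable_natCard_setOf_lt (x : ι → ℝ) :
    Measurable fun t : ℝ => (Nat.card {j | t < x j} : ℝ) := by
  simp_rw [natCard_eq_toReal_count]
  exact ENNReal.measurable_toReal.comp <| Antitone.measurable fun s t hst =>
    measure_mono fun j (hj : t < x j) => hst.trans_lt hj

/-- Layer-cake formula for `∑ⱼ ∫₀^{xⱼ} e^{-t} dt` with respect to the counting measure. -/
theorem integral_exp_neg_mul_natCard_setOf_lt [Countable ι] {x : ι → ℝ} (hx0 : 0 ≤ x)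
    (hx : Summable x) :
    ∫ t in Ioi 0, exp (-t) * Nat.card {j | t < x j} = ∑' j, (1 - exp (-x j)) := by
  have hterm : ∀ j, 0 ≤ 1 - exp (-x j) := fun j =>
    sub_nonneg.2 (exp_le_one_iff.2 (neg_nonpos.2 (hx0 j)))
  have layer := lintegral_comp_eq_lintegral_meas_lt_mul Measure.count (ae_of_all _ hx0)
    (measurable_of_countable x).aemeasurable (g := fun t => exp (-t))
    (fun t _ => (continuous_exp.comp continuous_neg).intervalIntegrable _ _)
    (ae_of_all _ fun t => (exp_pos _).le)
  simp only [intervalIntegral.integral_comp_neg (fun t => exp t), integral_exp, neg_zero,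
    exp_zero, lintegral_count] at layer
  rw [← ENNReal.ofReal_tsum_of_nonneg hterm (summable_one_sub_exp_neg hx0 hx)] at layer
  have hmeas : Measurable fun t : ℝ => exp (-t) * (Nat.card {j | t < x j} : ℝ) :=
    (measurable_exp.comp measurable_neg).mul (measurable_natCard_setOf_lt x)
  rw [integral_eq_lintegral_of_nonneg_ae (ae_of_all _ fun t => by positivity)
      hmeas.aestronglyMeasurable,
    ← ENNReal.toReal_ofReal (tsum_nonneg hterm), layer]
  congr 1
  refine setLIntegral_congr_fun measurableSet_Ioi fun t (ht : 0 < t) => ?_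
  rw [ENNReal.ofReal_mul (exp_pos _).le, natCard_eq_toReal_count, ENNReal.ofReal_toReal, mul_comm]
  exact (Measure.count_apply_eq_top.not.2 (hx.finite_setOf_lt ht).not_infinite)

end Counting

namespace RegularlyVarying

variable {α : ℝ → ℝ} {γ : ℝ}

lemma eventually_pos (h : RegularlyVarying α γ) (hα : ∀ x, 0 ≤ α x) :
    ∀ᶠ n : ℕ in atTop, 0 < α n := by
  have h1 : Tendsto (fun n : ℕ => α n / α n) atTop (𝓝 1) := by
    simpa only [mul_one, one_rpow] using h 1 one_pos
  filter_upwards [h1.eventually_ne one_ne_zero] with n hn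
  refine (hα n).lt_of_ne fun h0 => hn ?_
  simp [← h0]

/-- The lower bound is taken at points `s < u`, where `α (n s) / α n → s ^ γ`, and `s ^ γ → u ^ γ`
as `s → u⁻`. -/
lemma tendsto_div_of_le_of_le (h : RegularlyVarying α γ) (hα : ∀ x, 0 ≤ α x) {f : ℕ → ℝ}
    {u : ℝ} (hu : 0 < u) (hlow : ∀ s ∈ Ioo 0 u, ∀ᶠ n : ℕ in atTop, α (n * s) ≤ f n)
    (hup : ∀ᶠ n : ℕ in atTop, f n ≤ α (n * u)) :
    Tendsto (fun n => f n / α n) atTop (𝓝 (u ^ γ)) := by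
  refine tendsto_order.2 ⟨fun a ha => ?_, fun b hb => ?_⟩
  · have hnear : ∀ᶠ s in 𝓝[<] u, a < s ^ γ ∧ s ∈ Ioo 0 u :=
      (((continuousAt_rpow_const u γ (Or.inl hu.ne')).eventually (lt_mem_nhds ha)).filter_mono
        nhdsWithin_le_nhds).and (Ioo_mem_nhdsLT hu)
    obtain ⟨s, has, hs⟩ := hnear.exists
    filter_upwards [(h s hs.1).eventually (lt_mem_nhds has), hlow s hs] with n hn hfn
    exact hn.trans_le (div_le_div_of_nonneg_right hfn (hα n))
  · filter_upwards [(h u hu).eventually (gt_mem_nhds hb), hup] with n hn hfn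
    exact (div_le_div_of_nonneg_right hfn (hα n)).trans_lt hn

lemma le_pow_mul_of_le_mul {C : ℝ} (hC : 0 ≤ C) {N : ℕ}
    (hdouble : ∀ n : ℕ, N ≤ n → α (n * 2) ≤ C * α n) {n : ℕ} (hn : N ≤ n) (k : ℕ) :
    α (n * 2 ^ k) ≤ C ^ k * α n := by
  induction k with
  | zero => simp
  | succ k ih =>
    have hk : N ≤ n * 2 ^ k := hn.trans (Nat.le_mul_of_pos_right n (by positivity))
    calc α (n * 2 ^ (k + 1)) = α ((n * 2 ^ k : ℕ) * 2) := by push_cast; ring_nf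
      _ ≤ C * α (n * 2 ^ k) := by exact_mod_cast hdouble _ hk
      _ ≤ C * (C ^ k * α n) := mul_le_mul_of_nonneg_left ih hC
      _ = C ^ (k + 1) * α n := by ring

/-- Potter's bound, from iterating the doubling estimate `α (2 n) ≤ 2 ^ ρ α n`. -/
lemma eventually_le_two_rpow_mul (h : RegularlyVarying α γ) (hα : ∀ x, 0 ≤ α x)
    (hmono : Monotone α) {ρ : ℝ} (hγρ : γ < ρ) (hρ : 0 ≤ ρ) :
    ∀ᶠ n : ℕ in atTop, ∀ u, 1 ≤ u → α (n * u) ≤ 2 ^ ρ * u ^ ρ * α n := by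
  have hdouble : ∀ᶠ n : ℕ in atTop, α (n * 2) ≤ 2 ^ ρ * α n := by
    filter_upwards [h.eventually_pos hα, (h 2 two_pos).eventually
      (gt_mem_nhds (rpow_lt_rpow_of_exponent_lt one_lt_two hγρ))] with n hpos hn
    exact ((div_lt_iff₀ hpos).1 hn).le
  obtain ⟨N, hN⟩ := eventually_atTop.1 hdouble
  filter_upwards [eventually_ge_atTop N] with n hn u hu
  obtain ⟨k, hku, hu2k⟩ := exists_nat_pow_near hu one_lt_two
  calc α (n * u) ≤ α (n * 2 ^ (k + 1)) := hmono (by gcongr)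
    _ ≤ (2 ^ ρ) ^ (k + 1) * α n := le_pow_mul_of_le_mul (by positivity) hN hn (k + 1)
    _ = 2 ^ ρ * (2 ^ k) ^ ρ * α n := by rw [pow_succ', rpow_pow_comm zero_le_two]
    _ ≤ 2 ^ ρ * u ^ ρ * α n := by gcongr; exact hα n

end RegularlyVarying

lemma alpha0_nonneg (p : ℕ → ℝ) (u : ℝ) : 0 ≤ alpha0 p u := Nat.cast_nonneg _

section Occupancy

variable {p : ℕ → ℝ}

variable (hp : ∀ j, 0 < p j) (hsum : Summable p)
include hp hsum

lemma finite_setOf_one_div_le (u : ℝ) : {j | 1 / p j ≤ u}.Finite := by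
  rcases le_or_gt u 0 with hu | hu
  · convert finite_empty
    exact eq_empty_of_forall_notMem fun j hj => (hu.trans_lt (one_div_pos.2 (hp j))).not_ge hj
  · exact (hsum.finite_setOf_le (one_div_pos.2 hu)).subset fun j hj => (one_div_le (hp j) hu).1 hj

lemma alpha0_mono : Monotone (alpha0 p) := fun _ v huv => by
  unfold alpha0
  exact_mod_cast Nat.card_mono (finite_setOf_one_div_le hp hsum v) fun j hj => le_trans hj huv

lemma natCard_setOf_lt_le_alpha0 (c : ℝ) {t : ℝ} (ht : 0 < t) :
    (Nat.card {j | t < c * p j} : ℝ) ≤ alpha0 p (c * t⁻¹) := by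
  unfold alpha0
  refine Nat.cast_le.2 (Nat.card_mono (finite_setOf_one_div_le hp hsum _) fun j hj => ?_)
  simp only [mem_ofPred_eq] at hj ⊢
  rw [div_le_iff₀ (hp j)]
  calc (1 : ℝ) = t * t⁻¹ := (mul_inv_cancel₀ ht.ne').symm
    _ ≤ c * p j * t⁻¹ := by gcongr
    _ = c * t⁻¹ * p j := by ring

lemma alpha0_le_natCard_setOf_lt (c : ℝ) {s t : ℝ} (hs : 0 < s) (ht : 0 < t) (hst : s < t⁻¹) :
    alpha0 p (c * s) ≤ Nat.card {j | t < c * p j} := by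
  unfold alpha0
  refine Nat.cast_le.2 (Nat.card_mono ((hsum.mul_left c).finite_setOf_lt ht) fun j hj => ?_)
  simp only [mem_ofPred_eq] at hj ⊢
  rw [div_le_iff₀ (hp j)] at hj
  have hts : t * s < 1 := by rwa [← lt_inv_mul_iff₀ ht, mul_one]
  have hpj := hp j
  nlinarith

lemma natCard_setOf_lt_le_alpha0_mul {n : ℕ} {ρ : ℝ}
    (hpotter : ∀ u, 1 ≤ u → alpha0 p (n * u) ≤ 2 ^ ρ * u ^ ρ * alpha0 p n) {t : ℝ} (ht : 0 < t) :
    (Nat.card {j | t < n * p j} : ℝ) ≤ (2 ^ ρ * t ^ (-ρ) + 1) * alpha0 p n := by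
  refine (natCard_setOf_lt_le_alpha0 hp hsum n ht).trans ?_
  have hα := alpha0_nonneg p n
  rcases le_or_gt t 1 with ht1 | ht1
  · calc alpha0 p (n * t⁻¹) ≤ 2 ^ ρ * t⁻¹ ^ ρ * alpha0 p n := hpotter _ ((one_le_inv₀ ht).2 ht1)
      _ ≤ (2 ^ ρ * t ^ (-ρ) + 1) * alpha0 p n := by
        rw [inv_rpow ht.le, ← rpow_neg ht.le]; nlinarith
  · calc alpha0 p (n * t⁻¹) ≤ alpha0 p n :=
          alpha0_mono hp hsum (mul_le_of_le_one_right n.cast_nonneg (inv_le_one_of_one_le₀ ht1.le))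
      _ ≤ (2 ^ ρ * t ^ (-ρ) + 1) * alpha0 p n :=
          le_mul_of_one_le_left hα (le_add_of_nonneg_left (by positivity))

lemma tendsto_natCard_setOf_lt_div_alpha0 {γ : ℝ} (hRV : RegularlyVarying (alpha0 p) γ)
    {t : ℝ} (ht : 0 < t) :
    Tendsto (fun n : ℕ => (Nat.card {j | t < n * p j} : ℝ) / alpha0 p n) atTop (𝓝 (t ^ (-γ))) := by
  rw [rpow_neg ht.le, ← inv_rpow ht.le]
  exact hRV.tendsto_div_of_le_of_le (alpha0_nonneg p) (inv_pos.2 ht)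
    (fun s hs => .of_forall fun n => alpha0_le_natCard_setOf_lt hp hsum n hs.1 ht hs.2)
    (.of_forall fun n => natCard_setOf_lt_le_alpha0 hp hsum n ht)

end Occupancy

/-- Lemma (Karlin): `α(n)⁻¹ ∑_j P(M_{n,j} ≥ 1) = α(n)⁻¹ ∑_j (1 - e^{-n p_j}) → Γ(1-γ)`,
for independent `M_{n,j} ∼ Poisson(n p_j)`. -/
theorem poisson_occupancy_first_moment
    (p : ℕ → ℝ) (hp : ∀ j, 0 < p j) (hpsum : HasSum p 1)
    (γ : ℝ) (hγ : γ ∈ Set.Ioo (0 : ℝ) 1)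
    (hRV : RegularlyVarying (alpha0 p) γ) :
    Tendsto (fun n : ℕ => (∑' j : ℕ, (1 - Real.exp (-((n : ℝ) * p j)))) / alpha0 p n)
      atTop (𝓝 (Real.Gamma (1 - γ))) := by
  obtain ⟨hγ0, hγ1⟩ := hγ
  obtain ⟨ρ, hγρ, hρ1⟩ := exists_between hγ1
  have hsum := hpsum.summable
  have hα := alpha0_nonneg p
  have hrepr (n : ℕ) : (∑' j, (1 - exp (-(n * p j)))) / alpha0 p n =
      ∫ t in Ioi 0, exp (-t) * (Nat.card {j | t < n * p j} / alpha0 p n) := by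
    simp_rw [← mul_div_assoc]
    rw [integral_div, integral_exp_neg_mul_natCard_setOf_lt
      (fun j => mul_nonneg n.cast_nonneg (hp j).le) (hsum.mul_left (n : ℝ))]
  simp_rw [hrepr, Gamma_eq_integral (sub_pos.2 hγ1), sub_sub_cancel_left]
  refine tendsto_integral_filter_of_dominated_convergence
    (fun t => 2 ^ ρ * (exp (-t) * t ^ (-ρ)) + exp (-t)) ?_ ?_ ?_ ?_
  · exact .of_forall fun n => ((measurable_exp.comp measurable_neg).mul
      ((measurable_natCard_setOf_lt _).div_const _)).aestronglyMeasurable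
  · filter_upwards [hRV.eventually_pos hα, hRV.eventually_le_two_rpow_mul hα
      (alpha0_mono hp hsum) hγρ (hγ0.trans hγρ).le] with n hpos hpotter
    refine (ae_restrict_iff' measurableSet_Ioi).2 (ae_of_all _ fun t (ht : 0 < t) => ?_)
    rw [norm_of_nonneg (by positivity)]
    calc exp (-t) * (Nat.card {j | t < n * p j} / alpha0 p n)
        ≤ exp (-t) * (2 ^ ρ * t ^ (-ρ) + 1) := by
          gcongr
          exact (div_le_iff₀ hpos).2 (natCard_setOf_lt_le_alpha0_mul hp hsum hpotter ht)
      _ = 2 ^ ρ * (exp (-t) * t ^ (-ρ)) + exp (-t) := by ring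
  · have h := (GammaIntegral_convergent (sub_pos.2 hρ1)).const_mul (2 ^ ρ)
    rw [sub_sub_cancel_left] at h
    exact IntegrableOn.add h (by simpa using exp_neg_integrableOn_Ioi 0 one_pos)
  · refine (ae_restrict_iff' measurableSet_Ioi).2 (ae_of_all _ fun t (ht : 0 < t) => ?_)
    exact (tendsto_natCard_setOf_lt_div_alpha0 hp hsum hRV ht).const_mul _

end
end

section
/- Suppose that $V_{k,n}$, for $k,n\in\mathbb{N}$, are random variables, independent of random variables $N_n\sim\mathrm{Poisson}(n)$, such that $a_n(V_{N_n,n}-E_n)$ converges in distribution to $N(0,\tau^2)$ and such that $a_n(V_{k_n,n}-V_{n,n})\to 0$ in probability for every sequence $k_n$ with $|k_n-n|=O(\sqrt n)$, as $n\to\infty$, for given real numbers $a_n$ and $E_n$. Then $a_n(V_{n,n}-E_n)$ converges in distribution to $N(0,\tau^2)$. -/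
/-!
Conditioning on the independent index `N n`, the probability that `a n * (V (N n) n - V n n)`
is at least `ε` is the Poisson(`n`) mixture of `p n k = P(ε ≤ |a n * (V k n - V n n)|)`. A
Poisson(`n`) variable has variance `n`, so by Chebyshev `N n` lies in the window
`|k - n| ≤ C √n` up to probability `1 / C²`; inside the window `p n k ≤ p n (k n)` for a
maximiser `k n`, and `p n (k n) → 0` by hypothesis. So the Poissonized and the de-Poissonized
statistics differ by a term tending to `0` in probability, and Slutsky's lemma transfers the
Gaussian limit.
-/

open MeasureTheory ProbabilityTheory Filter Topology Real Set BoundedContinuousFunction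

noncomputable section

/-- Convergence in distribution: the laws of `X n` under `μ` converge weakly to `ν`. -/
def TendstoInDist {Ω : Type*} [MeasurableSpace Ω] (μ : Measure Ω)
    (X : ℕ → Ω → ℝ) (ν : Measure ℝ) : Prop :=
  ∀ f : ℝ →ᵇ ℝ, Tendsto (fun n => ∫ ω, f (X n ω) ∂μ) atTop (𝓝 (∫ x, f x ∂ν))

/-- Convergence in probability to a deterministic sequence of centers. -/
def TendstoInProbTo {Ω : Type*} [MeasurableSpace Ω] (μ : Measure Ω)
    (X : ℕ → Ω → ℝ) (c : ℕ → ℝ) : Prop :=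
  ∀ ε : ℝ, 0 < ε → Tendsto (fun n => μ {ω | ε ≤ |X n ω - c n|}) atTop (𝓝 0)

open scoped NNReal ENNReal Nat

namespace ProbabilityTheory

lemma hasSum_descFactorial_mul_poisson (r : ℝ≥0) (m : ℕ) :
    HasSum (fun j => (j.descFactorial m : ℝ) * (exp (-r) * r ^ j / j !)) ((r : ℝ) ^ m) := by
  rw [← hasSum_nat_add_iff' m, Finset.sum_eq_zero fun j hj => by
    simp [Nat.descFactorial_eq_zero_iff_lt.mpr (Finset.mem_range.mp hj)], sub_zero]
  have hshift (j : ℕ) : ((j + m).descFactorial m : ℝ) * (exp (-r) * r ^ (j + m) / (j + m)!)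
      = (r : ℝ) ^ m * (exp (-r) * r ^ j / j !) := by
    have hfact := Nat.factorial_mul_descFactorial (Nat.le_add_left m j)
    rw [Nat.add_sub_cancel] at hfact
    rw [← hfact, Nat.cast_mul, pow_add]
    field_simp
  simpa only [hshift, mul_one] using (hasSum_one_poissonMeasure r).mul_left ((r : ℝ) ^ m)

lemma hasSum_sq_sub_mul_poisson (r : ℝ≥0) :
    HasSum (fun j : ℕ => ((j : ℝ) - r) ^ 2 * (exp (-r) * r ^ j / j !)) r := by
  -- `(j - r)² = j (j - 1) + (1 - 2 r) j + r²`
  have h := ((hasSum_descFactorial_mul_poisson r 2).add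
    ((hasSum_descFactorial_mul_poisson r 1).mul_left (1 - 2 * (r : ℝ)))).add
    ((hasSum_descFactorial_mul_poisson r 0).mul_left ((r : ℝ) ^ 2))
  convert h using 1
  · ext j
    simp only [Nat.cast_descFactorial_two, Nat.descFactorial_one, Nat.descFactorial_zero]
    push_cast
    ring
  · ring

lemma poissonMeasure_real_lt_abs_sub_le {r : ℝ≥0} (hr : 0 < r) {C : ℝ} (hC : 0 < C) :
    (poissonMeasure r).real {j | C * √r < |(j : ℝ) - r|} ≤ 1 / C ^ 2 := by
  have hvar := hasSum_sq_sub_mul_poisson r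
  have hint : Integrable (fun j : ℕ => ((j : ℝ) - r) ^ 2) (poissonMeasure r) := by
    refine integrable_poissonMeasure_iff.2 (hvar.summable.congr fun j => ?_)
    rw [Real.norm_of_nonneg (sq_nonneg _), mul_comm]
  have hmarkov := mul_meas_ge_le_integral_of_nonneg (ae_of_all _ fun j => sq_nonneg _) hint
    (C ^ 2 * r)
  simp only [integral_poissonMeasure, smul_eq_mul, mul_comm (exp _ * _ / _), hvar.tsum_eq]
    at hmarkov
  have hsub : {j : ℕ | C * √r < |(j : ℝ) - r|} ⊆ {j | C ^ 2 * r ≤ ((j : ℝ) - r) ^ 2} := by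
    intro j hj
    have := pow_le_pow_left₀ (by positivity) (le_of_lt (show C * √r < _ from hj)) 2
    rwa [mul_pow, sq_sqrt r.coe_nonneg, sq_abs] at this
  have hr' : (0 : ℝ) < r := hr
  have hchebyshev := (mul_le_mul_of_nonneg_left (measureReal_mono hsub (μ := poissonMeasure r))
    (by positivity : 0 ≤ C ^ 2 * r)).trans hmarkov
  rw [le_div_iff₀ (by positivity)]
  nlinarith

lemma hasLaw_poissonMeasure {Ω : Type*} [MeasurableSpace Ω] {μ : Measure Ω} {N : Ω → ℕ}
    (hN : Measurable N) {r : ℝ≥0}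
    (h : ∀ k, μ {ω | N ω = k} = ENNReal.ofReal (exp (-r) * r ^ k / k !)) :
    HasLaw N (poissonMeasure r) μ where
  aemeasurable := hN.aemeasurable
  map_eq := Measure.ext_iff_singleton.2 fun k => by
    rw [Measure.map_apply hN (measurableSet_singleton k), poissonMeasure_singleton, ← h]
    rfl

lemma IndepFun.measure_mem_index_le {Ω β : Type*} [MeasurableSpace Ω] [MeasurableSpace β]
    {μ : Measure Ω} [IsProbabilityMeasure μ] {X : Ω → β} {N : Ω → ℕ} (hXN : IndepFun X N μ)
    (hN : Measurable N) {S : ℕ → Set β} (hS : ∀ j, MeasurableSet (S j)) {W : Set ℕ}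
    {b : ℝ≥0∞} (hb : ∀ j ∈ W, μ (X ⁻¹' S j) ≤ b) :
    μ {ω | X ω ∈ S (N ω)} ≤ b + μ (N ⁻¹' Wᶜ) := by
  set ν := μ.map N
  have hν (s : Set ℕ) : ν s = μ (N ⁻¹' s) := Measure.map_apply hN MeasurableSet.of_discrete
  have hsplit (j : ℕ) : μ (X ⁻¹' S j) * ν {j} ≤ b * ν {j} + Wᶜ.indicator (fun i => ν {i}) j := by
    by_cases hj : j ∈ W
    · rw [indicator_of_notMem (not_not_intro hj), add_zero]
      exact mul_le_mul_left (hb j hj) _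
    · rw [indicator_of_mem (mem_compl hj)]
      exact (mul_le_of_le_one_left' prob_le_one).trans le_add_self
  calc μ {ω | X ω ∈ S (N ω)} = μ (⋃ j, X ⁻¹' S j ∩ N ⁻¹' {j}) := by
        congr 1; ext ω; simp
    _ ≤ ∑' j, μ (X ⁻¹' S j ∩ N ⁻¹' {j}) := measure_iUnion_le _
    _ = ∑' j, μ (X ⁻¹' S j) * ν {j} := by
        congr 1 with j
        rw [hν, hXN.measure_inter_preimage_eq_mul _ _ (hS j) (measurableSet_singleton j)]
    _ ≤ ∑' j, (b * ν {j} + Wᶜ.indicator (fun i => ν {i}) j) := ENNReal.tsum_le_tsum hsplit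
    _ = b * ν univ + ν Wᶜ := by
        rw [ENNReal.tsum_add, ENNReal.tsum_mul_left,
          Measure.tsum_indicator_apply_singleton ν _ MeasurableSet.of_discrete,
          ← Measure.tsum_indicator_apply_singleton ν univ MeasurableSet.univ, indicator_univ]
    _ = b + μ (N ⁻¹' Wᶜ) := by rw [hν, hν, preimage_univ, measure_univ, mul_one]

end ProbabilityTheory

lemma exists_forall_abs_sub_le_imp_le {α : Type*} [LinearOrder α] (f : ℕ → α) (n : ℕ) {R : ℝ}
    (hR : 0 ≤ R) : ∃ j : ℕ, |(j : ℝ) - n| ≤ R ∧ ∀ i : ℕ, |(i : ℝ) - n| ≤ R → f i ≤ f j := by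
  have hfin : {i : ℕ | |(i : ℝ) - n| ≤ R}.Finite := by
    refine (finite_Iic (n + ⌈R⌉₊)).subset fun i hi => ?_
    have : (i : ℝ) ≤ n + ⌈R⌉₊ := by
      linarith [(abs_le.1 (show |(i : ℝ) - n| ≤ R from hi)).2, Nat.le_ceil R]
    exact_mod_cast this
  exact exists_max_image _ f hfin ⟨n, show |(n : ℝ) - n| ≤ R by simpa using hR⟩

section Window

variable {Ω : Type*} [MeasurableSpace Ω] {μ : Measure Ω}

/-- `N n - n = O_P(√n)`. -/
def SqrtDeviationTight (μ : Measure Ω) (N : ℕ → Ω → ℕ) : Prop :=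
  ∀ η : ℝ≥0∞, 0 < η →
    ∃ C : ℝ, 0 ≤ C ∧ ∀ᶠ n : ℕ in atTop, μ {ω | C * √n < |(N n ω : ℝ) - n|} ≤ η

lemma sqrtDeviationTight_of_hasLaw_poissonMeasure {N : ℕ → Ω → ℕ}
    (hN : ∀ n : ℕ, HasLaw (N n) (poissonMeasure n) μ) : SqrtDeviationTight μ N := by
  intro η hη
  have hlim : Tendsto (fun C : ℝ => ENNReal.ofReal (1 / C ^ 2)) atTop (𝓝 0) := by
    simpa using ENNReal.tendsto_ofReal ((tendsto_const_nhds (x := (1 : ℝ))).div_atTop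
      (tendsto_pow_atTop two_ne_zero))
  obtain ⟨C, hCη, hC⟩ :=
    ((ENNReal.tendsto_nhds_zero.1 hlim η hη).and (eventually_gt_atTop 0)).exists
  refine ⟨C, hC.le, (eventually_gt_atTop 0).mono fun n hn => le_trans ?_ hCη⟩
  rw [(hN n).measure_eq (p := fun j : ℕ => C * √n < |(j : ℝ) - n|) MeasurableSet.of_discrete,
    ← ofReal_measureReal]
  exact ENNReal.ofReal_le_ofReal (poissonMeasure_real_lt_abs_sub_le (by exact_mod_cast hn) hC)

theorem tendstoInProbTo_comp_of_indepFun [IsProbabilityMeasure μ] (Y : ℕ → ℕ → Ω → ℝ)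
    (N : ℕ → Ω → ℕ) (hN : ∀ n, Measurable (N n))
    (hindep : ∀ n, IndepFun (fun ω k => Y k n ω) (N n) μ) (htight : SqrtDeviationTight μ N)
    (hY : ∀ k : ℕ → ℕ, (∃ C : ℝ, ∀ n, |(k n : ℝ) - n| ≤ C * √n) →
      TendstoInProbTo μ (fun n => Y (k n) n) (fun _ => 0)) :
    TendstoInProbTo μ (fun n ω => Y (N n ω) n ω) (fun _ => 0) := by
  intro ε hε
  rw [ENNReal.tendsto_nhds_zero]
  intro η hη
  obtain ⟨C, hC, htail⟩ := htight (η / 2) (ENNReal.half_pos hη.ne')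
  choose k hk hkmax using fun n =>
    exists_forall_abs_sub_le_imp_le (fun j => μ {ω | ε ≤ |Y j n ω - 0|}) n
      (R := C * √n) (by positivity)
  have hkη := ENNReal.tendsto_nhds_zero.1 (hY k ⟨C, hk⟩ ε hε) (η / 2) (ENNReal.half_pos hη.ne')
  filter_upwards [htail, hkη] with n htail_n hk_n
  calc μ {ω | ε ≤ |Y (N n ω) n ω - 0|}
      ≤ μ {ω | ε ≤ |Y (k n) n ω - 0|} + μ (N n ⁻¹' {j | |(j : ℝ) - n| ≤ C * √n}ᶜ) :=
        (hindep n).measure_mem_index_le (hN n) (S := fun j => {v | ε ≤ |v j - 0|})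
          (fun j => measurableSet_le measurable_const (by fun_prop)) (hkmax n)
    _ ≤ η / 2 + η / 2 := by
        gcongr
        simpa only [preimage_compl, compl_ofPred, not_le, preimage_ofPred_eq] using htail_n
    _ = η := ENNReal.add_halves η

end Window

section Slutsky

variable {Ω : Type*} [MeasurableSpace Ω] {μ : Measure Ω} [IsProbabilityMeasure μ]
  {ν : Measure ℝ} [IsProbabilityMeasure ν]

lemma tendstoInDist_iff_tendstoInDistribution {X : ℕ → Ω → ℝ} (hX : ∀ n, AEMeasurable (X n) μ) :
    TendstoInDist μ X ν ↔ TendstoInDistribution X atTop id (fun _ => μ) ν := by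
  have hmap (n : ℕ) (f : ℝ →ᵇ ℝ) : ∫ x, f x ∂(μ.map (X n)) = ∫ ω, f (X n ω) ∂μ :=
    integral_map (hX n) f.continuous.aestronglyMeasurable
  refine ⟨fun h => ⟨hX, aemeasurable_id, ?_⟩, fun h f => ?_⟩
  · refine ProbabilityMeasure.tendsto_iff_forall_integral_tendsto.2 fun f => ?_
    simpa [hmap] using h f
  · simpa [hmap] using ProbabilityMeasure.tendsto_iff_forall_integral_tendsto.1 h.tendsto f

lemma TendstoInDist.of_tendstoInProbTo_sub {X Y : ℕ → Ω → ℝ} (hX : ∀ n, AEMeasurable (X n) μ)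
    (hY : ∀ n, AEMeasurable (Y n) μ) (h : TendstoInDist μ X ν)
    (hXY : TendstoInProbTo μ (fun n ω => Y n ω - X n ω) (fun _ => 0)) :
    TendstoInDist μ Y ν := by
  rw [tendstoInDist_iff_tendstoInDistribution hY]
  refine tendstoInDistribution_of_tendstoInMeasure_sub Y id
    ((tendstoInDist_iff_tendstoInDistribution hX).1 h) ?_ hY
  rw [tendstoInMeasure_iff_norm]
  simpa only [TendstoInProbTo, Pi.sub_apply, Pi.zero_apply, Real.norm_eq_abs, sub_zero] using hXY

end Slutsky

/-- De-Poissonization lemma: if `a_n (V_{N_n,n} - E_n) ⇝ N(0, τ²)` for Poisson variables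
`N_n ∼ Poisson(n)` independent of the `V_{k,n}`, and `a_n (V_{k_n,n} - V_{n,n}) → 0` in
probability whenever `|k_n - n| = O(√n)`, then `a_n (V_{n,n} - E_n) ⇝ N(0, τ²)`. -/
theorem dePoissonization
    {Ω : Type*} [MeasurableSpace Ω] (μ : Measure Ω) [IsProbabilityMeasure μ]
    (V : ℕ → ℕ → Ω → ℝ) (hVmeas : ∀ k n, Measurable (V k n))
    (N : ℕ → Ω → ℕ) (hNmeas : ∀ n, Measurable (N n))
    (hNpois : ∀ n k : ℕ,
      μ {ω | N n ω = k} =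
        ENNReal.ofReal (Real.exp (-(n : ℝ)) * (n : ℝ) ^ k / (Nat.factorial k : ℝ)))
    (hNindep : ∀ n : ℕ, IndepFun (fun ω => (fun k => V k n ω : ℕ → ℝ)) (N n) μ)
    (a E : ℕ → ℝ) (τ : ℝ)
    (h1 : TendstoInDist μ (fun n ω => a n * (V (N n ω) n ω - E n))
      (gaussianReal 0 (Real.toNNReal (τ ^ 2))))
    (h2 : ∀ k : ℕ → ℕ, (∃ C : ℝ, ∀ n : ℕ, |(k n : ℝ) - (n : ℝ)| ≤ C * Real.sqrt (n : ℝ)) →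
      TendstoInProbTo μ (fun n ω => a n * (V (k n) n ω - V n n ω)) (fun _ => 0)) :
    TendstoInDist μ (fun n ω => a n * (V n n ω - E n))
      (gaussianReal 0 (Real.toNNReal (τ ^ 2))) := by
  have hVvec (n : ℕ) : Measurable fun ω k => V k n ω := measurable_pi_lambda _ (hVmeas · n)
  have hVN (n : ℕ) : Measurable fun ω => V (N n ω) n ω :=
    (measurable_from_prod_countable_left (f := fun p : (ℕ → ℝ) × ℕ => p.1 p.2)
      measurable_pi_apply).comp ((hVvec n).prodMk (hNmeas n))
  have hlaw (n : ℕ) : HasLaw (N n) (poissonMeasure n) μ :=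
    hasLaw_poissonMeasure (hNmeas n) (by simpa using hNpois n)
  have hdiff : TendstoInProbTo μ (fun n ω => a n * (V (N n ω) n ω - V n n ω)) (fun _ => 0) :=
    tendstoInProbTo_comp_of_indepFun (fun k n ω => a n * (V k n ω - V n n ω)) N hNmeas
      (fun n => (hNindep n).comp
        (show Measurable fun v : ℕ → ℝ => fun k => a n * (v k - v n) by fun_prop) measurable_id)
      (sqrtDeviationTight_of_hasLaw_poissonMeasure hlaw) h2
  have hswap (n : ℕ) (ω : Ω) : a n * (V n n ω - E n) - a n * (V (N n ω) n ω - E n)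
      = -(a n * (V (N n ω) n ω - V n n ω)) := by ring
  refine h1.of_tendstoInProbTo_sub (fun n => (((hVN n).sub_const _).const_mul _).aemeasurable)
    (fun n => (((hVmeas n n).sub_const _).const_mul _).aemeasurable) fun ε hε => ?_
  simpa only [hswap, abs_neg, sub_zero] using hdiff ε hε
end
end
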